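/- arXiv:1305.3131 — 2 statements merged into one kernel-verified Lean document; each statement's English description precedes it below -/
import Mathlib

section
/- The refined tableau calculus Rf(box, T_{K_m}), obtained from T_{K_m} by replacing the rule (box) with the rule (□): T([r]p,x), T_R(r,x,y) / T(p,y), is sound and constructively complete for the logic K_m: every fully expanded Rf(box,T_{K_m})-tableau for a satisfiable finite set of K_m-formulas has an open branch, and for every open branch B of a fully expanded Rf(box,T_{K_m})-tableau there exists a K_m-model with domain the labels occurring in B in which every tableau formula of B is true (T(φ,t)∈B implies φ holds at t, F(φ,t)∈B implies φ fails at t, T_R(a,t,t')∈B implies (t,t')∈R_a, F_R(a,t,t')∈B implies (t,t')∉R_a). -/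
set_option autoImplicit false

namespace KmTableau

/-- Formulas of the multi-modal logic `K_m`:
`φ ::= p | ¬φ | φ∨φ | [a]φ`, with propositional variables `p : ℕ`
and relational constants `a : Fin m`. -/
inductive Fm (m : ℕ) : Type
  | var : ℕ → Fm m
  | neg : Fm m → Fm m
  | or : Fm m → Fm m → Fm m
  | box : Fin m → Fm m → Fm m

/-- A `K_m`-model `M = (W, (R_a)_a, V)` with `W` nonempty. -/
structure KModel (m : ℕ) where
  W : Type
  ne : Nonempty W
  R : Fin m → W → W → Prop
  V : ℕ → W → Prop

/-- Satisfaction in a `K_m`-model. -/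
def KModel.sat {m : ℕ} (M : KModel m) : M.W → Fm m → Prop
  | v, .var p => M.V p v
  | v, .neg φ => ¬ M.sat v φ
  | v, .or φ ψ => M.sat v φ ∨ M.sat v ψ
  | v, .box a φ => ∀ w, M.R a v w → M.sat w φ

/-- A set of formulas is satisfiable if some model and world satisfy all its members. -/
def Satisfiable {m : ℕ} (N : Set (Fm m)) : Prop :=
  ∃ (M : KModel m) (v : M.W), ∀ φ ∈ N, M.sat v φ

/-- Labels: terms generated from the initial constant `a₀` and Skolem terms `f(a,φ,t)`. -/
inductive Label (m : ℕ) : Type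
  | a0 : Label m
  | sk : Fin m → Fm m → Label m → Label m

/-- Tableau formulas: `T(φ,t)`, `F(φ,t)`, `T_R(a,t,t')`, `F_R(a,t,t')`. -/
inductive TabFm (m : ℕ) : Type
  | T : Fm m → Label m → TabFm m
  | F : Fm m → Label m → TabFm m
  | TR : Fin m → Label m → Label m → TabFm m
  | FR : Fin m → Label m → Label m → TabFm m

/-- The labels occurring in a tableau formula. -/
def TabFm.labels {m : ℕ} : TabFm m → Set (Label m)
  | .T _ t => {t}
  | .F _ t => {t}
  | .TR _ t t' => {t, t'}
  | .FR _ t t' => {t, t'}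

/-- The labels occurring in a set of tableau formulas (the initial label `a₀`,
introduced at the root, always counts as occurring). -/
def Lab {m : ℕ} (B : Set (TabFm m)) : Set (Label m) :=
  insert Label.a0 {t | ∃ f ∈ B, t ∈ f.labels}

/-- A calculus: `C s ds` holds if, on a branch whose set of formulas is `s`, some rule
of the calculus is applicable with denominator instances `ds` (a closure rule
application has `ds = []`). -/
abbrev Calc (m : ℕ) := Set (TabFm m) → List (Set (TabFm m)) → Prop

/-- The root node `{T(φ,a₀) | φ ∈ N}` of a tableau for input `N`. -/
def initial {m : ℕ} (N : Set (Fm m)) : Set (TabFm m) :=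
  {f | ∃ φ ∈ N, f = TabFm.T φ Label.a0}

/-- A tableau for input `N` in calculus `C`: a finitely branching tree of sets of tableau
formulas (nodes indexed by positions `List ℕ`, children of `p` being `p ++ [i]`), whose
root is `{T(φ,a₀) | φ ∈ N}`, and such that the children of every node are obtained by
applying a rule of `C`: each child adds one denominator instance to the node's set. -/
structure Tableau (m : ℕ) (C : Calc m) (N : Set (Fm m)) where
  node : List ℕ → Option (Set (TabFm m))
  rootEq : node [] = some (initial N)
  tree : ∀ (p : List ℕ) (i : ℕ), node (p ++ [i]) ≠ none → node p ≠ none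
  step : ∀ (p : List ℕ) (s : Set (TabFm m)), node p = some s →
    (∀ i : ℕ, node (p ++ [i]) = none) ∨
    (∃ ds, C s ds ∧ ∀ i : ℕ, node (p ++ [i]) = (ds[i]?).map (fun d => s ∪ d))

/-- A branch of a tableau: a maximal path from the root (represented by its
set of positions, a maximal chain under the prefix order). -/
structure Branch {m : ℕ} {C : Calc m} {N : Set (Fm m)} (Tb : Tableau m C N) where
  pos : Set (List ℕ)
  inTree : ∀ p ∈ pos, Tb.node p ≠ none
  chain : ∀ p ∈ pos, ∀ q ∈ pos, p <+: q ∨ q <+: p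
  downClosed : ∀ p ∈ pos, ∀ q : List ℕ, q <+: p → q ∈ pos
  maximal : ∀ q : List ℕ, Tb.node q ≠ none → (∀ p ∈ pos, p <+: q ∨ q <+: p) → q ∈ pos

/-- The set of tableau formulas occurring on a branch. -/
def Branch.fmls {m : ℕ} {C : Calc m} {N : Set (Fm m)} {Tb : Tableau m C N}
    (Br : Branch Tb) : Set (TabFm m) :=
  {f | ∃ p ∈ Br.pos, ∃ s, Tb.node p = some s ∧ f ∈ s}

/-- A branch is open if no closure rule has been applied (is applicable) on it. -/
def Branch.IsOpen {m : ℕ} {C : Calc m} {N : Set (Fm m)} {Tb : Tableau m C N}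
    (Br : Branch Tb) : Prop := ¬ C Br.fmls []

/-- A tableau is fully expanded if on every open branch every applicable rule has been
applied, i.e. some denominator instance of the rule is already contained in the branch. -/
def Tableau.Expanded {m : ℕ} {C : Calc m} {N : Set (Fm m)} (Tb : Tableau m C N) : Prop :=
  ∀ Br : Branch Tb, Br.IsOpen → ∀ ds, C Br.fmls ds → ∃ d ∈ ds, d ⊆ Br.fmls

/-- The calculus `T_{K_m}`. -/
def TKm (m : ℕ) : Calc m := fun s ds =>
  -- (¬⁺) T(¬p,x) / F(p,x)
  (∃ φ x, TabFm.T (.neg φ) x ∈ s ∧ ds = [{TabFm.F φ x}]) ∨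
  -- (¬⁻) F(¬p,x) / T(p,x)
  (∃ φ x, TabFm.F (.neg φ) x ∈ s ∧ ds = [{TabFm.T φ x}]) ∨
  -- (∨⁺) T(p∨q,x) / T(p,x) | T(q,x)
  (∃ φ ψ x, TabFm.T (.or φ ψ) x ∈ s ∧ ds = [{TabFm.T φ x}, {TabFm.T ψ x}]) ∨
  -- (∨⁻) F(p∨q,x) / F(p,x), F(q,x)
  (∃ φ ψ x, TabFm.F (.or φ ψ) x ∈ s ∧ ds = [{TabFm.F φ x, TabFm.F ψ x}]) ∨
  -- (box) T([r]p,x) / F_R(r,x,y) | T(p,y), for any label y occurring on the branch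
  (∃ a φ x y, TabFm.T (.box a φ) x ∈ s ∧ y ∈ Lab s ∧
    ds = [{TabFm.FR a x y}, {TabFm.T φ y}]) ∨
  -- (dia) F([r]p,x) / T_R(r,x,f(r,p,x)), F(p,f(r,p,x))
  (∃ a φ x, TabFm.F (.box a φ) x ∈ s ∧
    ds = [{TabFm.TR a x (Label.sk a φ x), TabFm.F φ (Label.sk a φ x)}]) ∨
  -- closure rules
  (∃ φ x, TabFm.T φ x ∈ s ∧ TabFm.F φ x ∈ s ∧ ds = []) ∨
  (∃ a x y, TabFm.TR a x y ∈ s ∧ TabFm.FR a x y ∈ s ∧ ds = [])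

/-- A `K_m`-model whose domain is (a set of) labels: the model `I(B)` constructed from a
branch has domain the set of labels occurring in `B`. -/
structure LModel (m : ℕ) where
  R : Fin m → Label m → Label m → Prop
  V : ℕ → Label m → Prop

/-- Satisfaction in a label model relativised to its domain `D`. -/
def LModel.sat {m : ℕ} (M : LModel m) (D : Set (Label m)) : Label m → Fm m → Prop
  | t, .var p => M.V p t
  | t, .neg φ => ¬ M.sat D t φ
  | t, .or φ ψ => M.sat D t φ ∨ M.sat D t ψ
  | t, .box a φ => ∀ t' ∈ D, M.R a t t' → M.sat D t' φ

/-- Every tableau formula of `B` is true in the model `M` with domain `Lab B`: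
`T(φ,t) ∈ B` implies `φ` holds at `t`; `F(φ,t) ∈ B` implies `φ` fails at `t`;
`T_R(a,t,t') ∈ B` implies `(t,t') ∈ R_a`; `F_R(a,t,t') ∈ B` implies `(t,t') ∉ R_a`. -/
def Reflects {m : ℕ} (M : LModel m) (B : Set (TabFm m)) : Prop :=
  (∀ φ t, TabFm.T φ t ∈ B → M.sat (Lab B) t φ) ∧
  (∀ φ t, TabFm.F φ t ∈ B → ¬ M.sat (Lab B) t φ) ∧
  (∀ a t t', TabFm.TR a t t' ∈ B → M.R a t t') ∧
  (∀ a t t', TabFm.FR a t t' ∈ B → ¬ M.R a t t')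

/-- The refined calculus `Rf(box, T_{K_m})`: `T_{K_m}` with the rule (box) replaced by
the rule (□): `T([r]p,x), T_R(r,x,y) / T(p,y)`. -/
def RfKm (m : ℕ) : Calc m := fun s ds =>
  (∃ φ x, TabFm.T (.neg φ) x ∈ s ∧ ds = [{TabFm.F φ x}]) ∨
  (∃ φ x, TabFm.F (.neg φ) x ∈ s ∧ ds = [{TabFm.T φ x}]) ∨
  (∃ φ ψ x, TabFm.T (.or φ ψ) x ∈ s ∧ ds = [{TabFm.T φ x}, {TabFm.T ψ x}]) ∨
  (∃ φ ψ x, TabFm.F (.or φ ψ) x ∈ s ∧ ds = [{TabFm.F φ x, TabFm.F ψ x}]) ∨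
  -- (□) T([r]p,x), T_R(r,x,y) / T(p,y)
  (∃ a φ x y, TabFm.T (.box a φ) x ∈ s ∧ TabFm.TR a x y ∈ s ∧ ds = [{TabFm.T φ y}]) ∨
  (∃ a φ x, TabFm.F (.box a φ) x ∈ s ∧
    ds = [{TabFm.TR a x (Label.sk a φ x), TabFm.F φ (Label.sk a φ x)}]) ∨
  (∃ φ x, TabFm.T φ x ∈ s ∧ TabFm.F φ x ∈ s ∧ ds = []) ∨
  (∃ a x y, TabFm.TR a x y ∈ s ∧ TabFm.FR a x y ∈ s ∧ ds = [])

/-! Soundness: given a model `M` of `N` at `v`, interpret labels by Skolem choice, sending `a₀`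
to `v` and `f(a,φ,t)` to an `a`-successor of the image of `t` refuting `φ`, if there is one.
Every rule of `Rf(box, T_{K_m})` has a denominator that stays true under this fixed
interpretation, and no closure rule applies to true formulas, so always descending into a true
child yields an open branch.

Completeness: on an open branch `B` of a fully expanded tableau, let `R_a` be the `T_R`-facts
and `V` the `T(p, ·)`-facts of `B`. The truth lemma follows by induction on formulas; the
refined rule (□) suffices for the box case because only `T_R`-edges of `B` are relations of
the model. -/

variable {m : ℕ}

namespace Tableau

variable {C : Calc m} {N : Set (Fm m)} (Tb : Tableau m C N)

theorem node_ne_none_of_prefix {p q : List ℕ} (hqp : q <+: p) (hp : Tb.node p ≠ none) :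
    Tb.node q ≠ none := by
  obtain ⟨r, rfl⟩ := hqp
  induction r using List.reverseRecOn with
  | nil => simpa using hp
  | append_singleton r i ih => exact ih (Tb.tree _ i (by simpa using hp))

theorem subset_of_node_child {p : List ℕ} {i : ℕ} {s s' : Set (TabFm m)}
    (hp : Tb.node p = some s) (hc : Tb.node (p ++ [i]) = some s') : s ⊆ s' := by
  rcases Tb.step p s hp with hleaf | ⟨ds, -, hch⟩
  · simp [hleaf i] at hc
  · rw [hch i] at hc
    obtain ⟨d, -, rfl⟩ := Option.map_eq_some_iff.mp hc
    exact Set.subset_union_left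

theorem node_mono {p q : List ℕ} {s s' : Set (TabFm m)} (hqp : q <+: p)
    (hq : Tb.node q = some s) (hp : Tb.node p = some s') : s ⊆ s' := by
  obtain ⟨r, rfl⟩ := hqp
  induction r using List.reverseRecOn generalizing s' with
  | nil => simp_all
  | append_singleton r i ih =>
    rw [← List.append_assoc] at hp
    obtain ⟨sm, hsm⟩ := Option.ne_none_iff_exists'.mp
      (Tb.tree _ i (hp ▸ Option.some_ne_none _))
    exact (ih hsm).trans (Tb.subset_of_node_child hsm hp)

theorem eq_of_prefix_of_leaf {p q : List ℕ} (hleaf : ∀ i, Tb.node (p ++ [i]) = none)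
    (hpq : p <+: q) (hq : Tb.node q ≠ none) : q = p := by
  obtain ⟨_ | ⟨i, r⟩, rfl⟩ := hpq
  · simp
  · exact absurd (hleaf i) (Tb.node_ne_none_of_prefix ⟨r, by simp⟩ hq)

theorem leaf_or_exists_child_subset {S : Set (TabFm m)}
    (hS : ∀ s ds, s ⊆ S → C s ds → ∃ d ∈ ds, d ⊆ S) {p : List ℕ} {s : Set (TabFm m)}
    (hp : Tb.node p = some s) (hs : s ⊆ S) :
    (∀ i, Tb.node (p ++ [i]) = none) ∨ ∃ i s', Tb.node (p ++ [i]) = some s' ∧ s' ⊆ S := by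
  rcases Tb.step p s hp with hleaf | ⟨ds, hC, hch⟩
  · exact Or.inl hleaf
  · obtain ⟨d, hd, hdS⟩ := hS s ds hs hC
    obtain ⟨i, hi, rfl⟩ := List.getElem_of_mem hd
    exact Or.inr ⟨i, s ∪ ds[i], by simp [hch i, hi], Set.union_subset hs hdS⟩

def IsDescent (f : ℕ → List ℕ) : Prop :=
  ∀ n, (∃ i, f (n + 1) = f n ++ [i]) ∨ (f (n + 1) = f n ∧ ∀ i, Tb.node (f n ++ [i]) = none)

namespace IsDescent

variable {Tb} {f : ℕ → List ℕ} (hf : IsDescent Tb f)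
include hf

theorem prefix_of_le {n k : ℕ} (hnk : n ≤ k) : f n <+: f k := by
  induction hnk with
  | refl => exact List.prefix_refl _
  | step _ ih =>
    refine ih.trans ?_
    rcases hf _ with ⟨i, hi⟩ | ⟨hi, -⟩
    · exact hi ▸ List.prefix_append _ _
    · exact hi ▸ List.prefix_refl _

theorem exists_leaf_of_prefix {q : List ℕ} (hq : ∀ n, f n <+: q) :
    ∃ n, ∀ i, Tb.node (f n ++ [i]) = none := by
  by_contra! hnoleaf
  have hlen : ∀ n, n ≤ (f n).length := by
    intro n
    induction n with
    | zero => exact Nat.zero_le _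
    | succ n ih =>
      rcases hf n with ⟨i, hi⟩ | ⟨-, hleaf⟩
      · simp [hi, ih]
      · obtain ⟨i, hi⟩ := hnoleaf n
        exact absurd (hleaf i) hi
  have := (hq (q.length + 1)).length_le
  have := hlen (q.length + 1)
  omega

def toBranch (hnode : ∀ n, Tb.node (f n) ≠ none) : Branch Tb where
  pos := {p | ∃ n, p <+: f n}
  inTree := fun _ ⟨n, hpn⟩ => Tb.node_ne_none_of_prefix hpn (hnode n)
  chain := by
    rintro p ⟨n, hpn⟩ q ⟨k, hqk⟩
    rcases le_total n k with h | h
    · exact List.prefix_or_prefix_of_prefix (hpn.trans (hf.prefix_of_le h)) hqk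
    · exact List.prefix_or_prefix_of_prefix hpn (hqk.trans (hf.prefix_of_le h))
  downClosed := fun _ ⟨n, hpn⟩ _ hqp => ⟨n, hqp.trans hpn⟩
  maximal := by
    intro q hq hcomp
    by_cases hin : ∃ n, q <+: f n
    · exact hin
    push Not at hin
    have hpre : ∀ n, f n <+: q := fun n =>
      (hcomp _ ⟨n, List.prefix_refl _⟩).resolve_right (hin n)
    obtain ⟨n, hleaf⟩ := hf.exists_leaf_of_prefix hpre
    exact ⟨n, (Tb.eq_of_prefix_of_leaf hleaf (hpre n) hq).symm ▸ List.prefix_refl _⟩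

end IsDescent

theorem exists_branch_fmls_subset (S : Set (TabFm m)) (hroot : initial N ⊆ S)
    (hS : ∀ s ds, s ⊆ S → C s ds → ∃ d ∈ ds, d ⊆ S) : ∃ Br : Branch Tb, Br.fmls ⊆ S := by
  classical
  let Q : List ℕ → Prop := fun p => ∃ s, Tb.node p = some s ∧ s ⊆ S
  let next : List ℕ → List ℕ := fun p =>
    if h : ∃ i, Q (p ++ [i]) then p ++ [h.choose] else p
  let f : ℕ → List ℕ := fun n => next^[n] []
  have hsucc : ∀ n, f (n + 1) = next (f n) := fun n => Function.iterate_succ_apply' _ _ _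
  have hQ : ∀ n, Q (f n) := by
    intro n
    induction n with
    | zero => exact ⟨_, Tb.rootEq, hroot⟩
    | succ n ih =>
      rw [hsucc]
      simp only [next]
      split_ifs with h
      · exact h.choose_spec
      · exact ih
  have hf : IsDescent Tb f := by
    intro n
    rw [hsucc]
    simp only [next]
    split_ifs with h
    · exact Or.inl ⟨_, rfl⟩
    · obtain ⟨s, hs, hsS⟩ := hQ n
      exact Or.inr ⟨rfl, (Tb.leaf_or_exists_child_subset hS hs hsS).resolve_right h⟩
  have hnode : ∀ n, Tb.node (f n) ≠ none := fun n => by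
    obtain ⟨s, hs, -⟩ := hQ n
    simp [hs]
  refine ⟨hf.toBranch hnode, ?_⟩
  rintro g ⟨p, ⟨n, hpn⟩, s, hs, hg⟩
  obtain ⟨s', hs', hs'S⟩ := hQ n
  exact hs'S (Tb.node_mono hpn hs hs' hg)

end Tableau

def TabFm.Holds (M : KModel m) (ι : Label m → M.W) : TabFm m → Prop
  | .T φ t => M.sat (ι t) φ
  | .F φ t => ¬ M.sat (ι t) φ
  | .TR a t t' => M.R a (ι t) (ι t')
  | .FR a t t' => ¬ M.R a (ι t) (ι t')

def KModel.WitnessesSkolem (M : KModel m) (ι : Label m → M.W) : Prop :=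
  ∀ a φ x, ¬ M.sat (ι x) (.box a φ) →
    M.R a (ι x) (ι (.sk a φ x)) ∧ ¬ M.sat (ι (.sk a φ x)) φ

open Classical in
noncomputable def KModel.skolemInterp (M : KModel m) (v : M.W) : Label m → M.W
  | .a0 => v
  | .sk a φ x =>
    if h : ∃ w, M.R a (M.skolemInterp v x) w ∧ ¬ M.sat w φ then h.choose
    else M.skolemInterp v x

theorem KModel.witnessesSkolem_skolemInterp (M : KModel m) (v : M.W) :
    M.WitnessesSkolem (M.skolemInterp v) := by
  intro a φ x hx
  simp only [KModel.sat, not_forall, exists_prop] at hx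
  simp only [KModel.skolemInterp, dif_pos hx]
  exact hx.choose_spec

theorem RfKm_exists_true_denominator {M : KModel m} {ι : Label m → M.W}
    (hι : M.WitnessesSkolem ι) {s : Set (TabFm m)} {ds : List (Set (TabFm m))}
    (hs : s ⊆ {f | f.Holds M ι}) (hC : RfKm m s ds) : ∃ d ∈ ds, d ⊆ {f | f.Holds M ι} := by
  rcases hC with ⟨φ, x, hp, rfl⟩ | ⟨φ, x, hp, rfl⟩ | ⟨φ, ψ, x, hp, rfl⟩ | ⟨φ, ψ, x, hp, rfl⟩ |
    ⟨a, φ, x, y, hp, hq, rfl⟩ | ⟨a, φ, x, hp, rfl⟩ | ⟨φ, x, hp, hq, rfl⟩ | ⟨a, x, y, hp, hq, rfl⟩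
  all_goals have hp := hs hp
  all_goals simp only [Set.mem_ofPred_eq, TabFm.Holds, KModel.sat, not_not, not_or] at hp
  · exact ⟨_, List.mem_singleton_self _, by simpa [TabFm.Holds] using hp⟩
  · exact ⟨_, List.mem_singleton_self _, by simpa [TabFm.Holds] using hp⟩
  · rcases hp with hφ | hψ
    · exact ⟨_, List.mem_cons_self, by simpa [TabFm.Holds] using hφ⟩
    · exact ⟨_, List.mem_cons_of_mem _ (List.mem_singleton_self _), by simpa [TabFm.Holds] using hψ⟩
  · exact ⟨_, List.mem_singleton_self _, by simpa [Set.insert_subset_iff, TabFm.Holds] using hp⟩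
  · exact ⟨_, List.mem_singleton_self _, by simpa [TabFm.Holds] using hp _ (hs hq)⟩
  · have := hι a φ x (by simpa [KModel.sat] using hp)
    exact ⟨_, List.mem_singleton_self _, by simpa [Set.insert_subset_iff, TabFm.Holds] using this⟩
  · exact absurd hp (hs hq)
  · exact absurd hp (hs hq)

theorem RfKm_exists_open_branch {N : Set (Fm m)} (hN : Satisfiable N)
    (Tb : Tableau m (RfKm m) N) : ∃ Br : Branch Tb, Br.IsOpen := by
  obtain ⟨M, v, hv⟩ := hN
  have hι := M.witnessesSkolem_skolemInterp v
  obtain ⟨Br, hBr⟩ := Tb.exists_branch_fmls_subset {f | f.Holds M (M.skolemInterp v)}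
    (by rintro _ ⟨φ, hφ, rfl⟩; exact hv φ hφ)
    (fun _ _ hs hC => RfKm_exists_true_denominator hι hs hC)
  refine ⟨Br, fun hclosed => ?_⟩
  obtain ⟨d, hd, -⟩ := RfKm_exists_true_denominator hι hBr hclosed
  exact List.not_mem_nil hd

def Saturated (C : Calc m) (B : Set (TabFm m)) : Prop :=
  ∀ ds, C B ds → ∃ d ∈ ds, d ⊆ B

theorem Saturated.not_closed {C : Calc m} {B : Set (TabFm m)} (hB : Saturated C B) :
    ¬ C B [] := fun h => by
  obtain ⟨d, hd, -⟩ := hB [] h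
  exact List.not_mem_nil hd

theorem Saturated.subset_of_singleton {C : Calc m} {B d : Set (TabFm m)}
    (hB : Saturated C B) (h : C B [d]) : d ⊆ B := by
  obtain ⟨d', hd', hsub⟩ := hB [d] h
  rwa [List.mem_singleton.mp hd'] at hsub

theorem mem_Lab_of_mem {B : Set (TabFm m)} {f : TabFm m} {t : Label m} (hf : f ∈ B)
    (ht : t ∈ f.labels) : t ∈ Lab B :=
  Set.mem_insert_of_mem _ ⟨f, hf, ht⟩

def canonicalModel (B : Set (TabFm m)) : LModel m where
  R a t t' := TabFm.TR a t t' ∈ B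
  V p t := TabFm.T (.var p) t ∈ B

theorem canonicalModel_sat_of_saturated {B : Set (TabFm m)} (hB : Saturated (RfKm m) B)
    (φ : Fm m) (t : Label m) :
    (TabFm.T φ t ∈ B → (canonicalModel B).sat (Lab B) t φ) ∧
      (TabFm.F φ t ∈ B → ¬ (canonicalModel B).sat (Lab B) t φ) := by
  induction φ generalizing t with
  | var p =>
    exact ⟨id, fun hF hT => hB.not_closed <|
      Or.inr <| Or.inr <| Or.inr <| Or.inr <| Or.inr <| Or.inr <| Or.inl ⟨_, t, hT, hF, rfl⟩⟩
  | neg φ ih =>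
    refine ⟨fun hT => ?_, fun hF => ?_⟩
    · exact (ih t).2 (hB.subset_of_singleton (Or.inl ⟨φ, t, hT, rfl⟩) rfl)
    · exact not_not_intro ((ih t).1 (hB.subset_of_singleton (Or.inr <| Or.inl ⟨φ, t, hF, rfl⟩) rfl))
  | or φ ψ ihφ ihψ =>
    refine ⟨fun hT => ?_, fun hF => ?_⟩
    · obtain ⟨d, hd, hdB⟩ := hB _ (Or.inr <| Or.inr <| Or.inl ⟨φ, ψ, t, hT, rfl⟩)
      rcases List.mem_pair.mp hd with rfl | rfl
      · exact Or.inl ((ihφ t).1 (hdB rfl))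
      · exact Or.inr ((ihψ t).1 (hdB rfl))
    · have hFs := hB.subset_of_singleton (Or.inr <| Or.inr <| Or.inr <| Or.inl ⟨φ, ψ, t, hF, rfl⟩)
      rintro (h | h)
      · exact (ihφ t).2 (hFs (Set.mem_insert _ _)) h
      · exact (ihψ t).2 (hFs (Set.mem_insert_of_mem _ rfl)) h
  | box a φ ih =>
    refine ⟨fun hT t' _ hTR => ?_, fun hF hsat => ?_⟩
    · exact (ih t').1 (hB.subset_of_singleton
        (Or.inr <| Or.inr <| Or.inr <| Or.inr <| Or.inl ⟨a, φ, t, t', hT, hTR, rfl⟩) rfl)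
    · have hsk := hB.subset_of_singleton
        (Or.inr <| Or.inr <| Or.inr <| Or.inr <| Or.inr <| Or.inl ⟨a, φ, t, hF, rfl⟩)
      have hTR : TabFm.TR a t (.sk a φ t) ∈ B := hsk (Set.mem_insert _ _)
      exact (ih _).2 (hsk (Set.mem_insert_of_mem _ rfl))
        (hsat _ (mem_Lab_of_mem hTR (by simp [TabFm.labels])) hTR)

theorem reflects_canonicalModel {B : Set (TabFm m)} (hB : Saturated (RfKm m) B) :
    Reflects (canonicalModel B) B :=
  ⟨fun φ t => (canonicalModel_sat_of_saturated hB φ t).1,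
    fun φ t => (canonicalModel_sat_of_saturated hB φ t).2,
    fun _ _ _ => id,
    fun a t t' hFR hTR => hB.not_closed <|
      Or.inr <| Or.inr <| Or.inr <| Or.inr <| Or.inr <| Or.inr <| Or.inr ⟨a, t, t', hTR, hFR, rfl⟩⟩

/-- The refined tableau calculus `Rf(box, T_{K_m})` is sound and
constructively complete for the logic `K_m`: every fully expanded `Rf(box,T_{K_m})`-tableau
for a satisfiable finite set of `K_m`-formulas has an open branch, and for every open
branch `B` of a fully expanded `Rf(box,T_{K_m})`-tableau there exists a `K_m`-model with
domain the labels occurring in `B` in which every tableau formula of `B` is true. -/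
theorem RfKm_sound_and_constructively_complete (m : ℕ) :
    (∀ N : Set (Fm m), N.Finite → Satisfiable N →
      ∀ Tb : Tableau m (RfKm m) N, Tb.Expanded → ∃ Br : Branch Tb, Br.IsOpen) ∧
    (∀ (N : Set (Fm m)) (Tb : Tableau m (RfKm m) N), Tb.Expanded →
      ∀ Br : Branch Tb, Br.IsOpen → ∃ M : LModel m, Reflects M Br.fmls) :=
  ⟨fun _ _ hN Tb _ => RfKm_exists_open_branch hN Tb,
    fun _ _ hE Br hO => ⟨canonicalModel Br.fmls, reflects_canonicalModel (hE Br hO)⟩⟩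

end KmTableau
end

section
/- The tableau calculus T_{K_m(¬)}⁺, obtained from T_{K_m(¬)} by adding the rule (□¬): T([¬r]p,x) / T_R(r,x,y) | T(p,y) (for any label y on the branch), is sound and constructively complete for the logic K_m(¬): every fully expanded T_{K_m(¬)}⁺-tableau for a satisfiable finite set of K_m(¬)-formulas has an open branch, and from every open branch B of a fully expanded T_{K_m(¬)}⁺-tableau a K_m(¬)-model with domain the labels of B can be constructed in which every tableau formula of B is true. -/
set_option autoImplicit false

namespace KmNotTableau

/-- Relation terms of the logic `K_m(¬)`: `α ::= a_1 | … | a_m | ¬α`. -/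
inductive RTerm (m : ℕ) : Type
  | atom : Fin m → RTerm m
  | neg : RTerm m → RTerm m

/-- Formulas of the logic `K_m(¬)`: `φ ::= p | ¬φ | φ∨φ | [α]φ`. -/
inductive Fm (m : ℕ) : Type
  | var : ℕ → Fm m
  | neg : Fm m → Fm m
  | or : Fm m → Fm m → Fm m
  | box : RTerm m → Fm m → Fm m

/-- A `K_m(¬)`-model `M = (W, (R_a)_a, V)` with `W` nonempty. -/
structure KModel (m : ℕ) where
  W : Type
  ne : Nonempty W
  R : Fin m → W → W → Prop
  V : ℕ → W → Prop

/-- Interpretation of relation terms: `R_{¬α} = (W×W) ∖ R_α`. -/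
def KModel.RT {m : ℕ} (M : KModel m) : RTerm m → M.W → M.W → Prop
  | .atom a => M.R a
  | .neg α => fun v w => ¬ M.RT α v w

/-- Satisfaction in a `K_m(¬)`-model. -/
def KModel.sat {m : ℕ} (M : KModel m) : M.W → Fm m → Prop
  | v, .var p => M.V p v
  | v, .neg φ => ¬ M.sat v φ
  | v, .or φ ψ => M.sat v φ ∨ M.sat v ψ
  | v, .box α φ => ∀ w, M.RT α v w → M.sat w φ

/-- A set of formulas is satisfiable if some model and world satisfy all its members. -/
def Satisfiable {m : ℕ} (N : Set (Fm m)) : Prop :=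
  ∃ (M : KModel m) (v : M.W), ∀ φ ∈ N, M.sat v φ

/-- Labels: terms generated from the initial constant `a₀` and Skolem terms `f(α,φ,t)`. -/
inductive Label (m : ℕ) : Type
  | a0 : Label m
  | sk : RTerm m → Fm m → Label m → Label m

/-- Tableau formulas: `T(φ,t)`, `F(φ,t)`, `T_R(α,t,t')`, `F_R(α,t,t')`. -/
inductive TabFm (m : ℕ) : Type
  | T : Fm m → Label m → TabFm m
  | F : Fm m → Label m → TabFm m
  | TR : RTerm m → Label m → Label m → TabFm m
  | FR : RTerm m → Label m → Label m → TabFm m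

/-- The labels occurring in a tableau formula. -/
def TabFm.labels {m : ℕ} : TabFm m → Set (Label m)
  | .T _ t => {t}
  | .F _ t => {t}
  | .TR _ t t' => {t, t'}
  | .FR _ t t' => {t, t'}

/-- The labels occurring in a set of tableau formulas (the initial label `a₀`,
introduced at the root, always counts as occurring). -/
def Lab {m : ℕ} (B : Set (TabFm m)) : Set (Label m) :=
  insert Label.a0 {t | ∃ f ∈ B, t ∈ f.labels}

/-- A calculus: `C s ds` holds if, on a branch whose set of formulas is `s`, some rule
of the calculus is applicable with denominator instances `ds` (a closure rule
application has `ds = []`). -/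
abbrev Calc (m : ℕ) := Set (TabFm m) → List (Set (TabFm m)) → Prop

/-- The root node `{T(φ,a₀) | φ ∈ N}` of a tableau for input `N`. -/
def initial {m : ℕ} (N : Set (Fm m)) : Set (TabFm m) :=
  {f | ∃ φ ∈ N, f = TabFm.T φ Label.a0}

/-- A tableau for input `N` in calculus `C`: a finitely branching tree of sets of tableau
formulas (nodes indexed by positions `List ℕ`, children of `p` being `p ++ [i]`), whose
root is `{T(φ,a₀) | φ ∈ N}`, and such that the children of every node are obtained by
applying a rule of `C`: each child adds one denominator instance to the node's set. -/
structure Tableau (m : ℕ) (C : Calc m) (N : Set (Fm m)) where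
  node : List ℕ → Option (Set (TabFm m))
  rootEq : node [] = some (initial N)
  tree : ∀ (p : List ℕ) (i : ℕ), node (p ++ [i]) ≠ none → node p ≠ none
  step : ∀ (p : List ℕ) (s : Set (TabFm m)), node p = some s →
    (∀ i : ℕ, node (p ++ [i]) = none) ∨
    (∃ ds, C s ds ∧ ∀ i : ℕ, node (p ++ [i]) = (ds[i]?).map (fun d => s ∪ d))

/-- A branch of a tableau: a maximal path from the root (represented by its
set of positions, a maximal chain under the prefix order). -/
structure Branch {m : ℕ} {C : Calc m} {N : Set (Fm m)} (Tb : Tableau m C N) where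
  pos : Set (List ℕ)
  inTree : ∀ p ∈ pos, Tb.node p ≠ none
  chain : ∀ p ∈ pos, ∀ q ∈ pos, p <+: q ∨ q <+: p
  downClosed : ∀ p ∈ pos, ∀ q : List ℕ, q <+: p → q ∈ pos
  maximal : ∀ q : List ℕ, Tb.node q ≠ none → (∀ p ∈ pos, p <+: q ∨ q <+: p) → q ∈ pos

/-- The set of tableau formulas occurring on a branch. -/
def Branch.fmls {m : ℕ} {C : Calc m} {N : Set (Fm m)} {Tb : Tableau m C N}
    (Br : Branch Tb) : Set (TabFm m) :=
  {f | ∃ p ∈ Br.pos, ∃ s, Tb.node p = some s ∧ f ∈ s}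

/-- A branch is open if no closure rule has been applied (is applicable) on it. -/
def Branch.IsOpen {m : ℕ} {C : Calc m} {N : Set (Fm m)} {Tb : Tableau m C N}
    (Br : Branch Tb) : Prop := ¬ C Br.fmls []

/-- A tableau is fully expanded if on every open branch every applicable rule has been
applied, i.e. some denominator instance of the rule is already contained in the branch. -/
def Tableau.Expanded {m : ℕ} {C : Calc m} {N : Set (Fm m)} (Tb : Tableau m C N) : Prop :=
  ∀ Br : Branch Tb, Br.IsOpen → ∀ ds, C Br.fmls ds → ∃ d ∈ ds, d ⊆ Br.fmls

/-- A `K_m(¬)`-model whose domain is (a set of) labels: the model `I(B)` constructed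
from a branch has domain the set of labels occurring in `B`. -/
structure LModel (m : ℕ) where
  R : Fin m → Label m → Label m → Prop
  V : ℕ → Label m → Prop

/-- Interpretation of relation terms in a label model: `R_{¬α}` is the complement. -/
def LModel.RT {m : ℕ} (M : LModel m) : RTerm m → Label m → Label m → Prop
  | .atom a => M.R a
  | .neg α => fun t t' => ¬ M.RT α t t'

/-- Satisfaction in a label model relativised to its domain `D`. -/
def LModel.sat {m : ℕ} (M : LModel m) (D : Set (Label m)) : Label m → Fm m → Prop
  | t, .var p => M.V p t
  | t, .neg φ => ¬ M.sat D t φ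
  | t, .or φ ψ => M.sat D t φ ∨ M.sat D t ψ
  | t, .box α φ => ∀ t' ∈ D, M.RT α t t' → M.sat D t' φ

/-- Every tableau formula of `B` is true in the model `M` with domain `Lab B`:
`T(φ,t) ∈ B` implies `φ` holds at `t`; `F(φ,t) ∈ B` implies `φ` fails at `t`;
`T_R(α,t,t') ∈ B` implies `(t,t') ∈ R_α`; `F_R(α,t,t') ∈ B` implies `(t,t') ∉ R_α`. -/
def Reflects {m : ℕ} (M : LModel m) (B : Set (TabFm m)) : Prop :=
  (∀ φ t, TabFm.T φ t ∈ B → M.sat (Lab B) t φ) ∧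
  (∀ φ t, TabFm.F φ t ∈ B → ¬ M.sat (Lab B) t φ) ∧
  (∀ α t t', TabFm.TR α t t' ∈ B → M.RT α t t') ∧
  (∀ α t t', TabFm.FR α t t' ∈ B → ¬ M.RT α t t')

/-- The calculus `T_{K_m(¬)}`. -/
def TKmNot (m : ℕ) : Calc m := fun s ds =>
  -- (¬⁺) T(¬p,x) / F(p,x)
  (∃ φ x, TabFm.T (.neg φ) x ∈ s ∧ ds = [{TabFm.F φ x}]) ∨
  -- (¬⁻) F(¬p,x) / T(p,x)
  (∃ φ x, TabFm.F (.neg φ) x ∈ s ∧ ds = [{TabFm.T φ x}]) ∨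
  -- (∨⁺) T(p∨q,x) / T(p,x) | T(q,x)
  (∃ φ ψ x, TabFm.T (.or φ ψ) x ∈ s ∧ ds = [{TabFm.T φ x}, {TabFm.T ψ x}]) ∨
  -- (∨⁻) F(p∨q,x) / F(p,x), F(q,x)
  (∃ φ ψ x, TabFm.F (.or φ ψ) x ∈ s ∧ ds = [{TabFm.F φ x, TabFm.F ψ x}]) ∨
  -- (box) T([r]p,x) / F_R(r,x,y) | T(p,y), for any label y occurring on the branch
  (∃ α φ x y, TabFm.T (.box α φ) x ∈ s ∧ y ∈ Lab s ∧
    ds = [{TabFm.FR α x y}, {TabFm.T φ y}]) ∨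
  -- (dia) F([r]p,x) / T_R(r,x,f(r,p,x)), F(p,f(r,p,x))
  (∃ α φ x, TabFm.F (.box α φ) x ∈ s ∧
    ds = [{TabFm.TR α x (Label.sk α φ x), TabFm.F φ (Label.sk α φ x)}]) ∨
  -- closure rules
  (∃ φ x, TabFm.T φ x ∈ s ∧ TabFm.F φ x ∈ s ∧ ds = []) ∨
  (∃ α x y, TabFm.TR α x y ∈ s ∧ TabFm.FR α x y ∈ s ∧ ds = []) ∨
  -- (¬R⁺) T_R(¬r,x,y) / F_R(r,x,y)
  (∃ α x y, TabFm.TR (.neg α) x y ∈ s ∧ ds = [{TabFm.FR α x y}]) ∨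
  -- (¬R⁻) F_R(¬r,x,y) / T_R(r,x,y)
  (∃ α x y, TabFm.FR (.neg α) x y ∈ s ∧ ds = [{TabFm.TR α x y}])

/-- The calculus `T_{K_m(¬)}⁺`: `T_{K_m(¬)}` extended with the rule
(□¬): `T([¬r]p,x) / T_R(r,x,y) | T(p,y)` (for any label `y` on the branch). -/
def TKmNotPlus (m : ℕ) : Calc m := fun s ds =>
  TKmNot m s ds ∨
  -- (□¬) T([¬r]p,x) / T_R(r,x,y) | T(p,y), for any label y occurring on the branch
  (∃ α φ x y, TabFm.T (.box (.neg α) φ) x ∈ s ∧ y ∈ Lab s ∧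
    ds = [{TabFm.TR α x y}, {TabFm.T φ y}])

/-!
Soundness: interpret the labels in a model of `N`, sending each Skolem term `f(α,φ,t)` to a
witness for the failure of `[α]φ` at `t` whenever there is one. Every rule, (□¬) included
since `R_{¬r}` is the complement of `R_r`, then has a denominator that is true whenever its
numerator set is, so following true children from the root yields a branch all of whose
formulas are true; such a branch cannot contain a closure instance.

Completeness: on an open fully expanded branch `B` put `(t,t') ∈ R_a` iff `T_R(a,t,t') ∈ B`
and `t ∈ V(p)` iff `T(p,t) ∈ B`. Induction on relation terms, using (¬R⁺), (¬R⁻) and the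
relational closure rule, shows that `T_R`/`F_R` formulas of `B` are true; induction on formulas
then handles `T`/`F` formulas, with (dia) providing witnesses among the labels of `B`.
-/

section Branches

variable {m : ℕ} {C : Calc m} {N : Set (Fm m)}

theorem Tableau.node_ne_none_of_prefix (Tb : Tableau m C N) {p q : List ℕ} (hpq : p <+: q)
    (hq : Tb.node q ≠ none) : Tb.node p ≠ none := by
  obtain ⟨t, rfl⟩ := hpq
  induction t using List.reverseRecOn with
  | nil => simpa using hq
  | append_singleton t i ih => exact ih (Tb.tree _ i (by simpa only [List.append_assoc] using hq))

noncomputable def greedyPath (P : List ℕ → Prop) : ℕ → List ℕ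
  | 0 => []
  | n + 1 => greedyPath P n ++ [Classical.epsilon fun i => P (greedyPath P n ++ [i])]

variable {P : List ℕ → Prop}

@[simp]
theorem length_greedyPath (n : ℕ) : (greedyPath P n).length = n := by
  induction n <;> simp [greedyPath, *]

theorem greedyPath_prefix_greedyPath {k n : ℕ} (h : k ≤ n) :
    greedyPath P k <+: greedyPath P n := by
  induction h with
  | refl => exact List.prefix_refl _
  | step _ ih => exact ih.trans (List.prefix_append _ _)

theorem greedyPath_succ_of_exists {n : ℕ} (h : ∃ i, P (greedyPath P n ++ [i])) :
    P (greedyPath P (n + 1)) :=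
  Classical.epsilon_spec h

theorem Tableau.exists_branch_forall (Tb : Tableau m C N) (hroot : P [])
    (hnode : ∀ p, P p → Tb.node p ≠ none)
    (hstep : ∀ p, P p → (∃ i, P (p ++ [i])) ∨ ∀ i, Tb.node (p ++ [i]) = none) :
    ∃ Br : Branch Tb, ∀ p ∈ Br.pos, P p := by
  let K : Set ℕ := {n | ∀ k ≤ n, P (greedyPath P k)}
  refine ⟨⟨greedyPath P '' K, ?_, ?_, ?_, ?_⟩, ?_⟩
  · rintro _ ⟨n, hn, rfl⟩
    exact hnode _ (hn n le_rfl)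
  · rintro _ ⟨n, -, rfl⟩ _ ⟨k, -, rfl⟩
    exact (le_total n k).imp greedyPath_prefix_greedyPath greedyPath_prefix_greedyPath
  · rintro _ ⟨n, hn, rfl⟩ q hq
    have hle : q.length ≤ n := by simpa using hq.length_le
    refine ⟨q.length, fun k hk => hn k (hk.trans hle), ?_⟩
    exact ((List.prefix_of_prefix_length_le hq (greedyPath_prefix_greedyPath hle)
      (by simp)).eq_of_length (by simp)).symm
  · intro q hq hcomp
    suffices key : ∀ n ≤ q.length, n ∈ K ∧ greedyPath P n <+: q by
      obtain ⟨hK, hpre⟩ := key q.length le_rfl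
      exact ⟨q.length, hK, hpre.eq_of_length (by simp)⟩
    intro n hn
    induction n with
    | zero => exact ⟨fun k hk => by simpa [Nat.le_zero.1 hk, greedyPath] using hroot,
        List.nil_prefix⟩
    | succ n ih =>
      obtain ⟨hnK, t, rfl⟩ := ih (by omega)
      obtain ⟨i, t, rfl⟩ : ∃ i t', t = i :: t' := List.exists_cons_of_ne_nil <| by
        rintro rfl
        simp at hn
      have hchild : Tb.node (greedyPath P n ++ [i]) ≠ none :=
        Tb.node_ne_none_of_prefix ⟨t, by simp⟩ hq
      have hP := greedyPath_succ_of_exists ((hstep _ (hnK n le_rfl)).resolve_right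
        fun hleaf => hchild (hleaf i))
      have hK : n + 1 ∈ K := fun k hk => (Nat.le_succ_iff.1 hk).elim (hnK k) (· ▸ hP)
      refine ⟨hK, (hcomp _ ⟨n + 1, hK, rfl⟩).elim id fun h => ?_⟩
      have hlen := h.length_le
      rw [h.eq_of_length (by simp only [List.length_append, List.length_cons,
        length_greedyPath] at hn hlen ⊢; omega)]
  · rintro _ ⟨n, hn, rfl⟩
    exact hn n le_rfl

end Branches

section Soundness

variable {m : ℕ}

def TabFm.Holds (M : KModel m) (ι : Label m → M.W) : TabFm m → Prop
  | .T φ t => M.sat (ι t) φ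
  | .F φ t => ¬ M.sat (ι t) φ
  | .TR α t t' => M.RT α (ι t) (ι t')
  | .FR α t t' => ¬ M.RT α (ι t) (ι t')

def IsSkolemWitnessing (M : KModel m) (ι : Label m → M.W) : Prop :=
  ∀ α φ x, ¬ M.sat (ι x) (.box α φ) →
    M.RT α (ι x) (ι (.sk α φ x)) ∧ ¬ M.sat (ι (.sk α φ x)) φ

noncomputable def skolemInterp (M : KModel m) (v : M.W) : Label m → M.W
  | .a0 => v
  | .sk α φ x => @Classical.epsilon _ M.ne fun w => M.RT α (skolemInterp M v x) w ∧ ¬ M.sat w φ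

theorem isSkolemWitnessing_skolemInterp (M : KModel m) (v : M.W) :
    IsSkolemWitnessing M (skolemInterp M v) := by
  intro α φ x hx
  simp only [KModel.sat, not_forall, exists_prop] at hx
  exact Classical.epsilon_spec hx

def LocallySound (C : Calc m) (M : KModel m) (ι : Label m → M.W) : Prop :=
  ∀ s ds, C s ds → (∀ f ∈ s, f.Holds M ι) → ∃ d ∈ ds, ∀ f ∈ d, f.Holds M ι

theorem locallySound_TKmNotPlus {M : KModel m} {ι : Label m → M.W}
    (hι : IsSkolemWitnessing M ι) : LocallySound (TKmNotPlus m) M ι := by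
  rintro s ds ((⟨φ, x, h, rfl⟩ | ⟨φ, x, h, rfl⟩ | ⟨φ, ψ, x, h, rfl⟩ | ⟨φ, ψ, x, h, rfl⟩ |
      ⟨α, φ, x, y, h, -, rfl⟩ | ⟨α, φ, x, h, rfl⟩ | ⟨φ, x, hT, hF, rfl⟩ | ⟨α, x, y, hT, hF, rfl⟩ |
      ⟨α, x, y, h, rfl⟩ | ⟨α, x, y, h, rfl⟩) | ⟨α, φ, x, y, h, -, rfl⟩) hs
  · simpa [TabFm.Holds, KModel.sat] using hs _ h
  · simpa [TabFm.Holds, KModel.sat] using hs _ h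
  · simpa [TabFm.Holds, KModel.sat] using hs _ h
  · simpa [TabFm.Holds, KModel.sat] using hs _ h
  · simpa [TabFm.Holds] using imp_iff_not_or.1 (hs _ h (ι y))
  · simpa [TabFm.Holds] using hι α φ x (hs _ h)
  · exact absurd (hs _ hT) (hs _ hF)
  · exact absurd (hs _ hT) (hs _ hF)
  · simpa [TabFm.Holds, KModel.RT] using hs _ h
  · simpa [TabFm.Holds, KModel.RT] using hs _ h
  · simpa [TabFm.Holds, KModel.RT] using imp_iff_not_or.1 (hs _ h (ι y))

variable {C : Calc m} {N : Set (Fm m)} {M : KModel m} {ι : Label m → M.W}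

def Tableau.NodeHolds (Tb : Tableau m C N) (M : KModel m) (ι : Label m → M.W) (p : List ℕ) :
    Prop :=
  ∃ s, Tb.node p = some s ∧ ∀ f ∈ s, f.Holds M ι

theorem Tableau.exists_child_nodeHolds (Tb : Tableau m C N) (hC : LocallySound C M ι)
    {p : List ℕ} (hp : Tb.NodeHolds M ι p) :
    (∃ i, Tb.NodeHolds M ι (p ++ [i])) ∨ ∀ i, Tb.node (p ++ [i]) = none := by
  obtain ⟨s, hs, hsHolds⟩ := hp
  refine (Tb.step p s hs).symm.imp (fun ⟨ds, hds, hchildren⟩ => ?_) id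
  obtain ⟨d, hd, hdHolds⟩ := hC s ds hds hsHolds
  obtain ⟨i, hi⟩ := List.mem_iff_getElem?.1 hd
  refine ⟨i, s ∪ d, by rw [hchildren, hi]; rfl, ?_⟩
  rintro f (hf | hf)
  exacts [hsHolds f hf, hdHolds f hf]

theorem Tableau.exists_isOpen_of_locallySound (Tb : Tableau m C N) (hC : LocallySound C M ι)
    (hN : ∀ φ ∈ N, M.sat (ι .a0) φ) : ∃ Br : Branch Tb, Br.IsOpen := by
  have hroot : Tb.NodeHolds M ι [] := ⟨_, Tb.rootEq, by rintro _ ⟨φ, hφ, rfl⟩; exact hN φ hφ⟩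
  obtain ⟨Br, hBr⟩ := Tb.exists_branch_forall hroot (fun p ⟨s, hs, _⟩ => by simp [hs])
    fun p hp => Tb.exists_child_nodeHolds hC hp
  have hfmls : ∀ f ∈ Br.fmls, f.Holds M ι := by
    rintro f ⟨p, hp, s, hs, hf⟩
    obtain ⟨s', hs', hs'Holds⟩ := hBr p hp
    exact hs'Holds f (Option.some_injective _ (hs'.symm.trans hs) ▸ hf)
  refine ⟨Br, fun hclosed => ?_⟩
  simpa using hC _ _ hclosed hfmls

end Soundness

namespace TKmNot

variable {m : ℕ} {s : Set (TabFm m)} {φ ψ : Fm m} {α : RTerm m} {x y : Label m}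

theorem negT (h : .T (.neg φ) x ∈ s) : TKmNot m s [{.F φ x}] := by
  unfold TKmNot; aesop

theorem negF (h : .F (.neg φ) x ∈ s) : TKmNot m s [{.T φ x}] := by
  unfold TKmNot; aesop

theorem orT (h : .T (.or φ ψ) x ∈ s) : TKmNot m s [{.T φ x}, {.T ψ x}] := by
  unfold TKmNot; aesop

theorem orF (h : .F (.or φ ψ) x ∈ s) : TKmNot m s [{.F φ x, .F ψ x}] := by
  unfold TKmNot; aesop

theorem box (h : .T (.box α φ) x ∈ s) (hy : y ∈ Lab s) :
    TKmNot m s [{.FR α x y}, {.T φ y}] := by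
  unfold TKmNot; aesop

theorem dia (h : .F (.box α φ) x ∈ s) :
    TKmNot m s [{.TR α x (.sk α φ x), .F φ (.sk α φ x)}] := by
  unfold TKmNot; aesop

theorem close (hT : .T φ x ∈ s) (hF : .F φ x ∈ s) : TKmNot m s [] := by
  unfold TKmNot; aesop

theorem closeR (hT : .TR α x y ∈ s) (hF : .FR α x y ∈ s) : TKmNot m s [] := by
  unfold TKmNot; aesop

theorem negRT (h : .TR (.neg α) x y ∈ s) : TKmNot m s [{.FR α x y}] := by
  unfold TKmNot; aesop

theorem negRF (h : .FR (.neg α) x y ∈ s) : TKmNot m s [{.TR α x y}] := by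
  unfold TKmNot; aesop

end TKmNot

section Completeness

variable {m : ℕ} {C : Calc m} {B : Set (TabFm m)}

def Saturated (C : Calc m) (B : Set (TabFm m)) : Prop :=
  ∀ ds, C B ds → ∃ d ∈ ds, d ⊆ B

theorem Saturated.mem_of_singleton (hB : Saturated C B) {f : TabFm m} (h : C B [{f}]) :
    f ∈ B := by
  obtain ⟨d, hd, hdB⟩ := hB _ h
  exact hdB (List.mem_singleton.1 hd ▸ rfl)

theorem Saturated.mem_or_mem (hB : Saturated C B) {f g : TabFm m} (h : C B [{f}, {g}]) :
    f ∈ B ∨ g ∈ B := by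
  obtain ⟨d, hd, hdB⟩ := hB _ h
  rcases List.mem_pair.1 hd with rfl | rfl
  exacts [Or.inl (hdB rfl), Or.inr (hdB rfl)]

theorem Saturated.mem_and_mem (hB : Saturated C B) {f g : TabFm m} (h : C B [{f, g}]) :
    f ∈ B ∧ g ∈ B := by
  obtain ⟨d, hd, hdB⟩ := hB _ h
  rw [List.mem_singleton.1 hd] at hdB
  exact ⟨hdB (Set.mem_insert _ _), hdB (Set.mem_insert_of_mem _ rfl)⟩

def canonicalModel (B : Set (TabFm m)) : LModel m where
  R a t t' := .TR (.atom a) t t' ∈ B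
  V p t := .T (.var p) t ∈ B

theorem canonicalModel_RT (hopen : ¬ TKmNot m B []) (hB : Saturated (TKmNot m) B)
    (α : RTerm m) (t t' : Label m) :
    (.TR α t t' ∈ B → (canonicalModel B).RT α t t') ∧
      (.FR α t t' ∈ B → ¬ (canonicalModel B).RT α t t') := by
  induction α generalizing t t' with
  | atom a => exact ⟨id, fun hF hT => hopen (TKmNot.closeR hT hF)⟩
  | neg α ih =>
    exact ⟨fun h => (ih t t').2 (hB.mem_of_singleton (TKmNot.negRT h)),
      fun h hR => hR ((ih t t').1 (hB.mem_of_singleton (TKmNot.negRF h)))⟩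

theorem canonicalModel_sat (hopen : ¬ TKmNot m B []) (hB : Saturated (TKmNot m) B)
    (φ : Fm m) (t : Label m) :
    (.T φ t ∈ B → (canonicalModel B).sat (Lab B) t φ) ∧
      (.F φ t ∈ B → ¬ (canonicalModel B).sat (Lab B) t φ) := by
  induction φ generalizing t with
  | var p => exact ⟨id, fun hF hT => hopen (TKmNot.close hT hF)⟩
  | neg φ ih =>
    exact ⟨fun h => (ih t).2 (hB.mem_of_singleton (TKmNot.negT h)),
      fun h hφ => hφ ((ih t).1 (hB.mem_of_singleton (TKmNot.negF h)))⟩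
  | or φ ψ ihφ ihψ =>
    refine ⟨fun h => ?_, fun h => ?_⟩
    · exact (hB.mem_or_mem (TKmNot.orT h)).imp (ihφ t).1 (ihψ t).1
    · obtain ⟨hφ, hψ⟩ := hB.mem_and_mem (TKmNot.orF h)
      exact not_or.2 ⟨(ihφ t).2 hφ, (ihψ t).2 hψ⟩
  | box α φ ih =>
    refine ⟨fun h t' ht' hR => ?_, fun h hbox => ?_⟩
    · obtain hF | hT := hB.mem_or_mem (TKmNot.box h ht')
      exacts [absurd hR ((canonicalModel_RT hopen hB α t t').2 hF), (ih t').1 hT]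
    · obtain ⟨hR, hF⟩ := hB.mem_and_mem (TKmNot.dia h)
      have hsk : Label.sk α φ t ∈ Lab B := Set.mem_insert_of_mem _ ⟨_, hR, by simp [TabFm.labels]⟩
      exact (ih _).2 hF (hbox _ hsk ((canonicalModel_RT hopen hB α t _).1 hR))

theorem reflects_canonicalModel (hopen : ¬ TKmNot m B []) (hB : Saturated (TKmNot m) B) :
    Reflects (canonicalModel B) B :=
  ⟨fun φ t => (canonicalModel_sat hopen hB φ t).1, fun φ t => (canonicalModel_sat hopen hB φ t).2,
    fun α t t' => (canonicalModel_RT hopen hB α t t').1,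
    fun α t t' => (canonicalModel_RT hopen hB α t t').2⟩

end Completeness

/-- The tableau calculus `T_{K_m(¬)}⁺`, obtained from `T_{K_m(¬)}` by
adding the rule (□¬): `T([¬r]p,x) / T_R(r,x,y) | T(p,y)` (for any label `y` on the
branch), is sound and constructively complete for the logic `K_m(¬)`: every fully
expanded `T_{K_m(¬)}⁺`-tableau for a satisfiable finite set of `K_m(¬)`-formulas has an
open branch, and from every open branch `B` of a fully expanded `T_{K_m(¬)}⁺`-tableau a
`K_m(¬)`-model with domain the labels of `B` can be constructed in which every tableau
formula of `B` is true. -/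
theorem TKmNotPlus_sound_and_constructively_complete (m : ℕ) :
    (∀ N : Set (Fm m), N.Finite → Satisfiable N →
      ∀ Tb : Tableau m (TKmNotPlus m) N, Tb.Expanded → ∃ Br : Branch Tb, Br.IsOpen) ∧
    (∀ (N : Set (Fm m)) (Tb : Tableau m (TKmNotPlus m) N), Tb.Expanded →
      ∀ Br : Branch Tb, Br.IsOpen → ∃ M : LModel m, Reflects M Br.fmls) := by
  refine ⟨fun N _ ⟨M, v, hv⟩ Tb _ => ?_, fun N Tb hexp Br hopen => ?_⟩
  · exact Tb.exists_isOpen_of_locallySound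
      (locallySound_TKmNotPlus (isSkolemWitnessing_skolemInterp M v)) hv
  · exact ⟨canonicalModel Br.fmls, reflects_canonicalModel (fun h => hopen (Or.inl h))
      fun ds h => hexp Br hopen ds (Or.inl h)⟩

end KmNotTableau
end
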